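/- arXiv:2003.07285 — 2 statements merged into one kernel-verified Lean document; each statement's English description precedes it below -/
import Mathlib

section
/- Let π_1, π_2, π_3 be three strings, each a permutation of a finite alphabet Σ with |Σ| = m. Then |lcs(π_1, π_2)| · |lcs(π_2, π_3)| · |lcs(π_3, π_1)| ≥ m. -/
/-!
Label each symbol `x` by the triple of lengths of longest common subsequences of the prefixes
ending at `x`, one for each of the pairs `(π₁, π₂)`, `(π₂, π₃)`, `(π₃, π₁)`. If two symbols are
ordered the same way in `πᵢ` and `πⱼ`, a common subsequence of the prefixes ending at the earlier
one extends by the later one, so their `(πᵢ, πⱼ)`-labels differ. Among three orders, two always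
agree on a pair of symbols, so the labelling is injective, and it takes values in a box of size
`|lcs(π₁, π₂)| · |lcs(π₂, π₃)| · |lcs(π₃, π₁)|`.
-/

/-- `lcsLen u v` is the length of a longest common subsequence of the strings
(lists) `u` and `v`: the maximum length of a list that is a sublist
(not necessarily contiguous subsequence) of both `u` and `v`. -/
def lcsLen {α : Type*} [DecidableEq α] (u v : List α) : ℕ :=
  ((u.sublists.filter (fun t => decide (t.Sublist v))).map List.length).foldr max 0

section
variable {α : Type*} [DecidableEq α]

theorem le_lcsLen {u v t : List α} (hu : t.Sublist u) (hv : t.Sublist v) :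
    t.length ≤ lcsLen u v :=
  List.le_max_of_le' 0 (List.mem_map_of_mem (List.mem_filter.2
    ⟨List.mem_sublists.2 hu, decide_eq_true hv⟩)) le_rfl

theorem lcsLen_le {u v : List α} {n : ℕ}
    (h : ∀ t : List α, t.Sublist u → t.Sublist v → t.length ≤ n) : lcsLen u v ≤ n := by
  refine List.max_le_of_forall_le _ n fun k hk => ?_
  obtain ⟨t, ht, rfl⟩ := List.mem_map.1 hk
  obtain ⟨htu, htv⟩ := List.mem_filter.1 ht
  exact h t (List.mem_sublists.1 htu) (of_decide_eq_true htv)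

def prefixUpTo (u : List α) (x : α) : List α :=
  u.take (u.idxOf x + 1)

theorem prefixUpTo_sublist (u : List α) (x : α) : (prefixUpTo u x).Sublist u :=
  List.take_sublist _ _

theorem prefixUpTo_eq_take_append {u : List α} {x : α} (hx : x ∈ u) :
    prefixUpTo u x = u.take (u.idxOf x) ++ [x] := by
  have hlt : u.idxOf x < u.length := List.idxOf_lt_length_iff.2 hx
  rw [prefixUpTo, ← List.take_concat_get' u _ hlt, List.getElem_idxOf hlt]

theorem mem_prefixUpTo {u : List α} {x : α} (hx : x ∈ u) : x ∈ prefixUpTo u x := by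
  simp [prefixUpTo_eq_take_append hx]

theorem append_sublist_prefixUpTo {u t : List α} {x y : α} (hy : y ∈ u)
    (hxy : u.idxOf x < u.idxOf y) (ht : t.Sublist (prefixUpTo u x)) :
    (t ++ [y]).Sublist (prefixUpTo u y) := by
  rw [prefixUpTo_eq_take_append hy]
  exact (ht.trans (List.take_sublist_take_left hxy)).append (List.Sublist.refl [y])

def prefixLcsLen (u v : List α) (x : α) : ℕ :=
  lcsLen (prefixUpTo u x) (prefixUpTo v x)

theorem one_le_prefixLcsLen {u v : List α} {x : α} (hu : x ∈ u) (hv : x ∈ v) :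
    1 ≤ prefixLcsLen u v x :=
  le_lcsLen (t := [x]) (List.singleton_sublist.2 (mem_prefixUpTo hu))
    (List.singleton_sublist.2 (mem_prefixUpTo hv))

theorem prefixLcsLen_le_lcsLen (u v : List α) (x : α) : prefixLcsLen u v x ≤ lcsLen u v :=
  lcsLen_le fun _ htu htv =>
    le_lcsLen (htu.trans (prefixUpTo_sublist u x)) (htv.trans (prefixUpTo_sublist v x))

theorem prefixLcsLen_lt_of_idxOf_lt {u v : List α} {x y : α} (hyu : y ∈ u) (hyv : y ∈ v)
    (hu : u.idxOf x < u.idxOf y) (hv : v.idxOf x < v.idxOf y) :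
    prefixLcsLen u v x < prefixLcsLen u v y := by
  have hpos := one_le_prefixLcsLen hyu hyv
  have hbound : prefixLcsLen u v x ≤ prefixLcsLen u v y - 1 :=
    lcsLen_le fun t htu htv => by
      have := le_lcsLen (append_sublist_prefixUpTo hyu hu htu)
        (append_sublist_prefixUpTo hyv hv htv)
      rw [List.length_append, List.length_singleton] at this
      exact Nat.le_sub_one_of_lt this
  omega

theorem prefixLcsLen_ne_of_idxOf_lt_iff {u v : List α} {x y : α} (hxu : x ∈ u) (hxv : x ∈ v)
    (hyu : y ∈ u) (hyv : y ∈ v) (hxy : x ≠ y)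
    (hord : u.idxOf x < u.idxOf y ↔ v.idxOf x < v.idxOf y) :
    prefixLcsLen u v x ≠ prefixLcsLen u v y := by
  have hune : u.idxOf x ≠ u.idxOf y := fun h => hxy ((List.idxOf_inj hxu).1 h)
  have hvne : v.idxOf x ≠ v.idxOf y := fun h => hxy ((List.idxOf_inj hxv).1 h)
  obtain ⟨hu, hv⟩ | ⟨hu, hv⟩ : u.idxOf x < u.idxOf y ∧ v.idxOf x < v.idxOf y ∨
      u.idxOf y < u.idxOf x ∧ v.idxOf y < v.idxOf x := by omega
  · exact (prefixLcsLen_lt_of_idxOf_lt hyu hyv hu hv).ne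
  · exact (prefixLcsLen_lt_of_idxOf_lt hxu hxv hu hv).ne'

end

open Finset

theorem lcs_triple_product_ge_general {α : Type*} [Fintype α] [DecidableEq α]
    (m : ℕ) (hm : Fintype.card α = m)
    (π₁ π₂ π₃ : List α)
    (h₁all : ∀ c : α, c ∈ π₁)
    (h₂all : ∀ c : α, c ∈ π₂)
    (h₃all : ∀ c : α, c ∈ π₃) :
    m ≤ lcsLen π₁ π₂ * lcsLen π₂ π₃ * lcsLen π₃ π₁ := by
  let label (x : α) : ℕ × ℕ × ℕ :=
    (prefixLcsLen π₁ π₂ x, prefixLcsLen π₂ π₃ x, prefixLcsLen π₃ π₁ x)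
  let box : Finset (ℕ × ℕ × ℕ) :=
    Icc 1 (lcsLen π₁ π₂) ×ˢ Icc 1 (lcsLen π₂ π₃) ×ˢ Icc 1 (lcsLen π₃ π₁)
  have hmaps : Set.MapsTo label (univ : Finset α) box := fun x _ => by
    simp only [box, label, mem_coe, mem_product, mem_Icc]
    exact ⟨⟨one_le_prefixLcsLen (h₁all x) (h₂all x), prefixLcsLen_le_lcsLen _ _ _⟩,
      ⟨one_le_prefixLcsLen (h₂all x) (h₃all x), prefixLcsLen_le_lcsLen _ _ _⟩,
      ⟨one_le_prefixLcsLen (h₃all x) (h₁all x), prefixLcsLen_le_lcsLen _ _ _⟩⟩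
  have hinj : Set.InjOn label (univ : Finset α) := by
    intro x _ y _ hlabel
    by_contra hxy
    simp only [label, Prod.mk.injEq] at hlabel
    obtain ⟨h₁₂, h₂₃, h₃₁⟩ := hlabel
    -- of any three orderings, two put `x` and `y` in the same order
    obtain h | h | h : (π₁.idxOf x < π₁.idxOf y ↔ π₂.idxOf x < π₂.idxOf y) ∨
        (π₂.idxOf x < π₂.idxOf y ↔ π₃.idxOf x < π₃.idxOf y) ∨
        (π₃.idxOf x < π₃.idxOf y ↔ π₁.idxOf x < π₁.idxOf y) := by tauto
    · exact prefixLcsLen_ne_of_idxOf_lt_iff (h₁all x) (h₂all x) (h₁all y) (h₂all y) hxy h h₁₂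
    · exact prefixLcsLen_ne_of_idxOf_lt_iff (h₂all x) (h₃all x) (h₂all y) (h₃all y) hxy h h₂₃
    · exact prefixLcsLen_ne_of_idxOf_lt_iff (h₃all x) (h₁all x) (h₃all y) (h₁all y) hxy h h₃₁
  calc m = #(univ : Finset α) := by rw [card_univ, hm]
    _ ≤ #box := card_le_card_of_injOn label hmaps hinj
    _ = lcsLen π₁ π₂ * lcsLen π₂ π₃ * lcsLen π₃ π₁ := by simp [box, mul_assoc]

/-- **Lemma 10.** Let `π₁, π₂, π₃` be three strings, each a permutation
of a finite alphabet `Σ` with `|Σ| = m`. Then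
`|lcs(π₁, π₂)| · |lcs(π₂, π₃)| · |lcs(π₃, π₁)| ≥ m`. -/
theorem lcs_triple_product_ge {α : Type*} [Fintype α] [DecidableEq α]
    (m : ℕ) (hm : Fintype.card α = m)
    (π₁ π₂ π₃ : List α)
    (h₁nd : π₁.Nodup) (h₁all : ∀ c : α, c ∈ π₁)
    (h₂nd : π₂.Nodup) (h₂all : ∀ c : α, c ∈ π₂)
    (h₃nd : π₃.Nodup) (h₃all : ∀ c : α, c ∈ π₃) :
    m ≤ lcsLen π₁ π₂ * lcsLen π₂ π₃ * lcsLen π₃ π₁ :=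
  lcs_triple_product_ge_general m hm π₁ π₂ π₃ h₁all h₂all h₃all
end

section
/- Let x, x̄, y, z̄ be four strings, each a permutation of the same finite alphabet Σ, and let d = |lcs(x, x̄)|. Then |lcs(y, z̄)| · |lcs(y, x̄)| · |lcs(x, z̄)| ≥ d. In particular, at least one of |lcs(y, z̄)|, |lcs(y, x̄)|, |lcs(x, z̄)| is at least d^{1/3}. -/
/-!
Fix a longest common subsequence `w` of `x` and `x̄`, and label each symbol `c` of `w` by the
triple of lcs lengths of the prefixes ending at `c` of the pairs `(y, z̄)`, `(y, x̄)`, `(x, z̄)`.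
The labels lie in `[1, |lcs(y, z̄)|] × [1, |lcs(y, x̄)|] × [1, |lcs(x, z̄)|]`, and they are
distinct: if `c` precedes `c'` in `y`, then either `c` precedes `c'` in `z̄` or in `x̄` (and the
first or second coordinate grows), or `c'` precedes `c` in both `z̄` and `x̄`, hence in `x` since
`w` orders them the same way in `x` and `x̄` (and the third coordinate shrinks). So `d ≤` the
product, as in the Erdős–Szekeres argument.
-/

namespace List

variable {α : Type*} [DecidableEq α]

theorem pair_sublist_of_idxOf_lt {l : List α} {a b : α} (hb : b ∈ l)
    (h : l.idxOf a < l.idxOf b) : [a, b] <+ l := by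
  have ha : a ∈ l := idxOf_lt_length_iff.1 (h.trans (idxOf_lt_length_iff.2 hb))
  have ha' : a ∈ l.take (l.idxOf b) := (mem_take_iff_idxOf_lt ha).2 h
  have hb' : b ∈ l.drop (l.idxOf b) := by
    rw [drop_eq_getElem_cons (idxOf_lt_length_iff.2 hb), getElem_idxOf]
    exact mem_cons_self
  have := (singleton_sublist.2 ha').append (singleton_sublist.2 hb')
  rwa [take_append_drop] at this

theorem idxOf_lt_idxOf_of_pair_sublist {l : List α} (hl : l.Nodup) {a b : α}
    (h : [a, b] <+ l) : l.idxOf a < l.idxOf b := by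
  obtain ⟨r₁, r₂, rfl, ha, hb⟩ := cons_sublist_iff.1 h
  have hb₂ : b ∈ r₂ := singleton_sublist.1 hb
  have hb₁ : b ∉ r₁ := fun hb₁ => (nodup_append.1 hl).2.2 b hb₁ b hb₂ rfl
  rw [idxOf_append_of_mem ha, idxOf_append_of_notMem hb₁]
  exact (idxOf_lt_length_iff.2 ha).trans_le (Nat.le_add_right _ _)

theorem idxOf_lt_idxOf_of_common_sublist {w l l' : List α} (hl : l.Nodup) (hl' : l'.Nodup)
    (hw : w <+ l) (hw' : w <+ l') {a b : α} (ha : a ∈ w) (hb : b ∈ w)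
    (h : l'.idxOf a < l'.idxOf b) : l.idxOf a < l.idxOf b := by
  rcases lt_trichotomy (w.idxOf a) (w.idxOf b) with hlt | heq | hgt
  · exact idxOf_lt_idxOf_of_pair_sublist hl ((pair_sublist_of_idxOf_lt hb hlt).trans hw)
  · rw [(idxOf_inj ha).1 heq] at h
    exact absurd h (lt_irrefl _)
  · exact absurd (idxOf_lt_idxOf_of_pair_sublist hl' ((pair_sublist_of_idxOf_lt ha hgt).trans hw'))
      h.asymm

def takeThrough (l : List α) (a : α) : List α :=
  l.take (l.idxOf a + 1)

theorem takeThrough_sublist (l : List α) (a : α) : l.takeThrough a <+ l :=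
  take_sublist _ _

theorem takeThrough_eq_take_append {l : List α} {a : α} (ha : a ∈ l) :
    l.takeThrough a = l.take (l.idxOf a) ++ [a] := by
  rw [takeThrough, take_add_one, getElem?_idxOf ha]
  rfl

theorem singleton_sublist_takeThrough {l : List α} {a : α} (ha : a ∈ l) :
    [a] <+ l.takeThrough a := by
  rw [takeThrough_eq_take_append ha]
  exact singleton_sublist.2 (mem_append_right _ (mem_singleton_self a))

theorem takeThrough_append_sublist {l : List α} {a b : α} (hb : b ∈ l)
    (h : l.idxOf a < l.idxOf b) : l.takeThrough a ++ [b] <+ l.takeThrough b := by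
  rw [takeThrough_eq_take_append hb]
  exact (take_sublist_take_left h).append_right _

end List

open List

section Lcs

variable {α : Type*} [DecidableEq α]

theorem length_le_lcsLen {t u v : List α} (hu : t <+ u) (hv : t <+ v) :
    t.length ≤ lcsLen u v :=
  le_max_of_le (mem_map_of_mem (mem_filter.2 ⟨mem_sublists.2 hu, decide_eq_true hv⟩)) le_rfl

theorem exists_sublist_length_eq_lcsLen (u v : List α) :
    ∃ t, t <+ u ∧ t <+ v ∧ t.length = lcsLen u v := by
  have hne : (u.sublists.filter (fun t => decide (t <+ v))).map length ≠ [] :=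
    ne_nil_of_mem (mem_map_of_mem
      (mem_filter.2 ⟨mem_sublists.2 (nil_sublist u), decide_eq_true (nil_sublist v)⟩))
  obtain ⟨t, ht, hlen⟩ := mem_map.1 (maximum_mem (foldr_max_of_ne_nil hne).symm)
  obtain ⟨htu, htv⟩ : t <+ u ∧ t <+ v := by simpa using ht
  exact ⟨t, htu, htv, hlen⟩

theorem lcsLen_mono {u u' v v' : List α} (hu : u' <+ u) (hv : v' <+ v) :
    lcsLen u' v' ≤ lcsLen u v := by
  obtain ⟨t, htu, htv, hlen⟩ := exists_sublist_length_eq_lcsLen u' v'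
  exact hlen ▸ length_le_lcsLen (htu.trans hu) (htv.trans hv)

theorem lcsLen_add_one_le_append_singleton (u v : List α) (a : α) :
    lcsLen u v + 1 ≤ lcsLen (u ++ [a]) (v ++ [a]) := by
  obtain ⟨t, htu, htv, hlen⟩ := exists_sublist_length_eq_lcsLen u v
  simpa [hlen] using length_le_lcsLen (htu.append_right [a]) (htv.append_right [a])

def lcsUpTo (u v : List α) (a : α) : ℕ :=
  lcsLen (u.takeThrough a) (v.takeThrough a)

theorem one_le_lcsUpTo {u v : List α} {a : α} (hu : a ∈ u) (hv : a ∈ v) :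
    1 ≤ lcsUpTo u v a :=
  length_le_lcsLen (singleton_sublist_takeThrough hu) (singleton_sublist_takeThrough hv)

theorem lcsUpTo_le_lcsLen (u v : List α) (a : α) : lcsUpTo u v a ≤ lcsLen u v :=
  lcsLen_mono (takeThrough_sublist u a) (takeThrough_sublist v a)

theorem lcsUpTo_lt_lcsUpTo {u v : List α} {a b : α} (hu : b ∈ u) (hv : b ∈ v)
    (hau : u.idxOf a < u.idxOf b) (hav : v.idxOf a < v.idxOf b) :
    lcsUpTo u v a < lcsUpTo u v b :=
  (lcsLen_add_one_le_append_singleton _ _ b).trans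
    (lcsLen_mono (takeThrough_append_sublist hu hau) (takeThrough_append_sublist hv hav))

variable {x xb y zb w : List α}

theorem lcsUpTo_triple_ne_of_idxOf_lt (hx : x.Nodup) (hxb : xb.Nodup) (hwx : w <+ x)
    (hwxb : w <+ xb) (hwy : w ⊆ y) (hwzb : w ⊆ zb) {a b : α} (ha : a ∈ w) (hb : b ∈ w)
    (hab : y.idxOf a < y.idxOf b) :
    (lcsUpTo y zb a, lcsUpTo y xb a, lcsUpTo x zb a) ≠
      (lcsUpTo y zb b, lcsUpTo y xb b, lcsUpTo x zb b) := by
  have hne : a ≠ b := fun h => (h ▸ hab).false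
  intro heq
  simp only [Prod.mk.injEq] at heq
  obtain ⟨hyzb, hyxb, hxzb⟩ := heq
  rcases lt_trichotomy (zb.idxOf a) (zb.idxOf b) with hz | hz | hz
  · exact (lcsUpTo_lt_lcsUpTo (hwy hb) (hwzb hb) hab hz).ne hyzb
  · exact hne ((idxOf_inj (hwzb ha)).1 hz)
  rcases lt_trichotomy (xb.idxOf a) (xb.idxOf b) with hxb' | hxb' | hxb'
  · exact (lcsUpTo_lt_lcsUpTo (hwy hb) (hwxb.subset hb) hab hxb').ne hyxb
  · exact hne ((idxOf_inj (hwxb.subset ha)).1 hxb')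
  have hx' : x.idxOf b < x.idxOf a := idxOf_lt_idxOf_of_common_sublist hx hxb hwx hwxb hb ha hxb'
  exact (lcsUpTo_lt_lcsUpTo (hwx.subset ha) (hwzb ha) hx' hz).ne' hxzb

theorem lcsLen_le_lcsLen_mul_lcsLen_mul_lcsLen (hx : x.Nodup) (hxb : xb.Nodup)
    (hxy : x ⊆ y) (hxzb : x ⊆ zb) :
    lcsLen x xb ≤ lcsLen y zb * lcsLen y xb * lcsLen x zb := by
  obtain ⟨w, hwx, hwxb, hw⟩ := exists_sublist_length_eq_lcsLen x xb
  have hwy : w ⊆ y := fun c hc => hxy (hwx.subset hc)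
  have hwzb : w ⊆ zb := fun c hc => hxzb (hwx.subset hc)
  let label : α → ℕ × ℕ × ℕ := fun c => (lcsUpTo y zb c, lcsUpTo y xb c, lcsUpTo x zb c)
  have hmaps : Set.MapsTo label w.toFinset ↑(Finset.Icc 1 (lcsLen y zb) ×ˢ
      Finset.Icc 1 (lcsLen y xb) ×ˢ Finset.Icc 1 (lcsLen x zb)) := by
    intro c hc
    have hc : c ∈ w := mem_toFinset.1 hc
    simp only [label, Finset.coe_product, Set.mem_prod, Finset.coe_Icc, Set.mem_Icc]
    exact ⟨⟨one_le_lcsUpTo (hwy hc) (hwzb hc), lcsUpTo_le_lcsLen _ _ _⟩,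
      ⟨one_le_lcsUpTo (hwy hc) (hwxb.subset hc), lcsUpTo_le_lcsLen _ _ _⟩,
      ⟨one_le_lcsUpTo (hwx.subset hc) (hwzb hc), lcsUpTo_le_lcsLen _ _ _⟩⟩
  have hinj : Set.InjOn label w.toFinset := by
    intro a ha b hb heq
    have ha : a ∈ w := mem_toFinset.1 ha
    have hb : b ∈ w := mem_toFinset.1 hb
    rcases lt_trichotomy (y.idxOf a) (y.idxOf b) with hab | hab | hab
    · exact absurd heq (lcsUpTo_triple_ne_of_idxOf_lt hx hxb hwx hwxb hwy hwzb ha hb hab)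
    · exact (idxOf_inj (hwy ha)).1 hab
    · exact absurd heq.symm (lcsUpTo_triple_ne_of_idxOf_lt hx hxb hwx hwxb hwy hwzb hb ha hab)
  have hcard := Finset.card_le_card_of_injOn label hmaps hinj
  rw [toFinset_card_of_nodup (hwx.nodup hx), hw] at hcard
  simpa [Finset.card_product, mul_assoc] using hcard

end Lcs

theorem Real.rpow_one_div_three_le_max_of_le_mul_mul {d a b e : ℝ} (hd : 0 ≤ d)
    (ha : 0 ≤ a) (hb : 0 ≤ b) (he : 0 ≤ e) (h : d ≤ a * b * e) :
    d ^ (1 / 3 : ℝ) ≤ max a (max b e) := by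
  have hM : 0 ≤ max a (max b e) := le_max_of_le_left ha
  rw [one_div, Real.rpow_inv_le_iff_of_pos hd hM (by norm_num)]
  calc d ≤ a * b * e := h
    _ ≤ max a (max b e) * max a (max b e) * max a (max b e) := by
      gcongr <;> simp
    _ = max a (max b e) ^ (3 : ℝ) := by norm_cast; ring

theorem lcs_quadruple_triple_inequality_general {α : Type*} [DecidableEq α]
    (x xb y zb : List α)
    (hxnd : x.Nodup)
    (hxbnd : xb.Nodup)
    (hyall : ∀ c : α, c ∈ y)
    (hzball : ∀ c : α, c ∈ zb)
    (d : ℕ) (hd : d = lcsLen x xb) :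
    d ≤ lcsLen y zb * lcsLen y xb * lcsLen x zb ∧
      (d : ℝ) ^ ((1 : ℝ) / 3) ≤
        max (lcsLen y zb : ℝ) (max (lcsLen y xb : ℝ) (lcsLen x zb : ℝ)) := by
  subst hd
  have key : lcsLen x xb ≤ lcsLen y zb * lcsLen y xb * lcsLen x zb :=
    lcsLen_le_lcsLen_mul_lcsLen_mul_lcsLen hxnd hxbnd (fun c _ => hyall c) (fun c _ => hzball c)
  exact ⟨key, Real.rpow_one_div_three_le_max_of_le_mul_mul (by positivity) (by positivity)
    (by positivity) (by positivity) (by exact_mod_cast key)⟩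

/-- **triple inequality from the proof of Lemma 11.** Let `x, x̄, y, z̄`
be four strings, each a permutation of the same finite alphabet `Σ`, and let
`d = |lcs(x, x̄)|`. Then `|lcs(y, z̄)| · |lcs(y, x̄)| · |lcs(x, z̄)| ≥ d`; in particular,
at least one of `|lcs(y, z̄)|, |lcs(y, x̄)|, |lcs(x, z̄)|` is at least `d^{1/3}`. -/
theorem lcs_quadruple_triple_inequality {α : Type*} [Fintype α] [DecidableEq α]
    (x xb y zb : List α)
    (hxnd : x.Nodup) (hxall : ∀ c : α, c ∈ x)
    (hxbnd : xb.Nodup) (hxball : ∀ c : α, c ∈ xb)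
    (hynd : y.Nodup) (hyall : ∀ c : α, c ∈ y)
    (hzbnd : zb.Nodup) (hzball : ∀ c : α, c ∈ zb)
    (d : ℕ) (hd : d = lcsLen x xb) :
    d ≤ lcsLen y zb * lcsLen y xb * lcsLen x zb ∧
      (d : ℝ) ^ ((1 : ℝ) / 3) ≤
        max (lcsLen y zb : ℝ) (max (lcsLen y xb : ℝ) (lcsLen x zb : ℝ)) :=
  lcs_quadruple_triple_inequality_general x xb y zb hxnd hxbnd hyall hzball d hd
end
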